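/- For any P-forest F, the principal order ideals Λ_1^F, Λ_2^F, …, Λ_n^F form a maximum independent set of the graph G_P. -/

import Mathlib

attribute [local instance] Classical.propDecidable

noncomputable section

open Finset

variable {n : ℕ}

/-- The comparability graph of the poset structure `P` on `Fin n`; for an order
ideal of `P`, connectivity of its induced subgraph in this graph agrees with
connectivity of the Hasse diagram. -/
def compGraph (P : PartialOrder (Fin n)) : SimpleGraph (Fin n) where
  Adj i j := i ≠ j ∧ (P.le i j ∨ P.le j i)
  symm := by
    refine ⟨?_⟩
    intro i j h
    exact ⟨h.1.symm, h.2.symm⟩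
  loopless := by
    refine ⟨?_⟩
    intro i h
    exact h.1 rfl

/-- `J` is an order ideal of the poset `P`. -/
def IsIdeal (P : PartialOrder (Fin n)) (J : Finset (Fin n)) : Prop :=
  ∀ i ∈ J, ∀ j : Fin n, P.le j i → j ∈ J

/-- The Hasse diagram of `J` as a subposet of `P` is a connected graph. -/
def JConn (P : PartialOrder (Fin n)) (J : Finset (Fin n)) : Prop :=
  ((compGraph P).induce (↑J : Set (Fin n))).Connected

/-- `J` is a connected order ideal of `P`. -/
def IsConnIdeal (P : PartialOrder (Fin n)) (J : Finset (Fin n)) : Prop :=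
  IsIdeal P J ∧ JConn P J

/-- The type of connected order ideals of `P` (the vertices of `G_P`). -/
abbrev ConnIdeal (P : PartialOrder (Fin n)) : Type :=
  {J : Finset (Fin n) // IsConnIdeal P J}

instance (P : PartialOrder (Fin n)) : Fintype (ConnIdeal P) := Fintype.ofFinite _

/-- `A` and `B` intersect nontrivially. -/
def Nontriv (A B : Finset (Fin n)) : Prop :=
  (A ∩ B).Nonempty ∧ ¬ A ⊆ B ∧ ¬ B ⊆ A

/-- The graph `G_P` on the connected order ideals of `P`, with two ideals
adjacent iff they intersect nontrivially. -/
def GP (P : PartialOrder (Fin n)) : SimpleGraph (ConnIdeal P) where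
  Adj A B := Nontriv A.1 B.1
  symm := by
    refine ⟨?_⟩
    intro A B h
    exact ⟨by rw [Finset.inter_comm]; exact h.1, h.2.2, h.2.1⟩
  loopless := by
    refine ⟨?_⟩
    intro A h
    exact h.2.1 (Finset.Subset.refl _)

instance (P : PartialOrder (Fin n)) : Fintype ((GP P).ConnectedComponent) :=
  Fintype.ofFinite _

instance (P : PartialOrder (Fin n)) : Fintype ((GP P).edgeSet) :=
  Fintype.ofFinite _

/-- `s` is an independent set of the graph `G`. -/
def IsIndep {V : Type*} (G : SimpleGraph V) (s : Finset V) : Prop :=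
  ∀ a ∈ s, ∀ b ∈ s, ¬ G.Adj a b

/-- `s` is a maximum independent set of the graph `G`. -/
def IsMaxIndep {V : Type*} (G : SimpleGraph V) (s : Finset V) : Prop :=
  IsIndep G s ∧ ∀ t : Finset V, IsIndep G t → t.card ≤ s.card

/-- `s` is a maximum independent set of the subgraph of `G` induced on the
vertex set `S` (e.g. on a connected component of `G`). -/
def IsMaxIndepOn {V : Type*} (G : SimpleGraph V) (S : Set V) (s : Finset V) : Prop :=
  ↑s ⊆ S ∧ IsIndep G s ∧ ∀ t : Finset V, ↑t ⊆ S → IsIndep G t → t.card ≤ s.card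

/-- `μ(M, J) = ⋃_{J' ∈ M, J' ⊊ J} J'`. -/
def mu (P : PartialOrder (Fin n)) (M : Finset (ConnIdeal P)) (J : Finset (Fin n)) :
    Finset (Fin n) :=
  (M.filter (fun J' => J'.1 ⊂ J)).biUnion (fun J' => J'.1)

/-- The strict order relation of the poset `F_M` associated with a maximum
independent set `M` of `G_P`: `i <_{F_M} j` iff `J_a ⊊ J_b` where `J_a, J_b ∈ M`
satisfy `J_a \ μ(M,J_a) = {i}` and `J_b \ μ(M,J_b) = {j}`. -/
def FMlt (P : PartialOrder (Fin n)) (M : Finset (ConnIdeal P)) (i j : Fin n) : Prop :=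
  ∃ Ja ∈ M, ∃ Jb ∈ M,
    Ja.1 \ mu P M Ja.1 = {i} ∧ Jb.1 \ mu P M Jb.1 = {j} ∧ Ja.1 ⊂ Jb.1

/-- The order relation of the poset `F_M`. -/
def FMle (P : PartialOrder (Fin n)) (M : Finset (ConnIdeal P)) (i j : Fin n) : Prop :=
  i = j ∨ FMlt P M i j

/-- Strict relation associated with the relation `le`. -/
def ltRel (le : Fin n → Fin n → Prop) (i j : Fin n) : Prop := le i j ∧ i ≠ j

/-- `j` covers `i` in the order given by the relation `le`. -/
def CovRel (le : Fin n → Fin n → Prop) (i j : Fin n) : Prop :=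
  ltRel le i j ∧ ∀ k : Fin n, ltRel le i k → ¬ ltRel le k j

/-- The principal order ideal `Λ_i = {j : j ≤ i}` of the order given by `le`. -/
def LamRel (le : Fin n → Fin n → Prop) (i : Fin n) : Finset (Fin n) :=
  Finset.univ.filter (fun j => le j i)

/-- The descent set of a forest order given by the relation `le`:
elements `i` whose parent (the element covering `i`) is smaller than `i`. -/
def DesRel (le : Fin n → Fin n → Prop) : Finset (Fin n) :=
  Finset.univ.filter (fun i => ∃ j : Fin n, CovRel le i j ∧ j < i)

/-- `Des(M) = Des(F_M)`. -/
def DesM (P : PartialOrder (Fin n)) (M : Finset (ConnIdeal P)) : Finset (Fin n) :=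
  DesRel (FMle P M)

/-- `Des(M_r, M)`. -/
def DesMr (P : PartialOrder (Fin n)) (Mr M : Finset (ConnIdeal P)) : Finset (Fin n) :=
  (DesM P M).filter (fun i => ∃ J ∈ Mr, J.1 \ mu P M J.1 = {i})

/-- `Des̄(M_r, M)`. -/
def DesBarMr (P : PartialOrder (Fin n)) (Mr M : Finset (ConnIdeal P)) :
    Finset (ConnIdeal P) :=
  Mr.filter (fun J => ∃ i ∈ DesMr P Mr M, J.1 \ mu P M J.1 = {i})

/-- The relation `le` is (the order relation of) a `P`-forest: a partial order
whose Hasse diagram is a forest, all of whose principal order ideals are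
connected order ideals of `P`, and such that for incomparable `i, j` the union
`Λ_i ∪ Λ_j` is a disconnected order ideal of `P`. -/
structure IsPForestRel (P : PartialOrder (Fin n)) (le : Fin n → Fin n → Prop) : Prop where
  refl : ∀ i, le i i
  trans : ∀ i j k, le i j → le j k → le i k
  antisymm : ∀ i j, le i j → le j i → i = j
  forest : ∀ i j k, CovRel le i j → CovRel le i k → j = k
  connIdeal : ∀ i, IsConnIdeal P (LamRel le i)
  disc : ∀ i j : Fin n, ¬ le i j → ¬ le j i →
    IsIdeal P (LamRel le i ∪ LamRel le j) ∧ ¬ JConn P (LamRel le i ∪ LamRel le j)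

/-- The principal order ideal `Λ_i^P` of `P`. -/
def PIdeal (P : PartialOrder (Fin n)) (i : Fin n) : Finset (Fin n) :=
  Finset.univ.filter (fun k => P.le k i)

/-- The generating set `gs(J)`: the maximal elements of `J` with respect to `P`. -/
def gsJ (P : PartialOrder (Fin n)) (J : Finset (Fin n)) : Finset (Fin n) :=
  J.filter (fun i => ∀ j ∈ J, ¬ P.lt i j)

/-- `P` is naturally labeled. -/
def NatLabeled (P : PartialOrder (Fin n)) : Prop :=
  ∀ i j : Fin n, P.lt i j → i < j

/-- `U_max(M, J)`: the maximal members of `U(M,J) = {J' ∈ M : J' ⊊ J}`. -/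
def Umax (P : PartialOrder (Fin n)) (M : Finset (ConnIdeal P)) (J : Finset (Fin n)) :
    Finset (ConnIdeal P) :=
  (M.filter (fun Ja => Ja.1 ⊂ J)).filter
    (fun Ja => ∀ Jb ∈ M, Jb.1 ⊂ J → Jb ≠ Ja → ¬ Ja.1 ⊂ Jb.1)

/-- The set of vertices of `G_P` which are principal order ideals of `P`. -/
def PIdealSet (P : PartialOrder (Fin n)) : Set (ConnIdeal P) :=
  {A : ConnIdeal P | ∃ i : Fin n, A.1 = PIdeal P i}

/-- The graph `H_P`: the subgraph of `G_P` induced by the principal order ideals. -/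
def HP (P : PartialOrder (Fin n)) : SimpleGraph (PIdealSet P) :=
  (GP P).induce (PIdealSet P)

/-- `f` is a `P`-partition. -/
def IsPPartition (P : PartialOrder (Fin n)) (f : Fin n → ℕ) : Prop :=
  (∀ i j : Fin n, P.lt i j → f j ≤ f i) ∧
  (∀ i j : Fin n, P.lt i j → j < i → f j < f i)

/-- The monomial `∏_{k ∈ J} x_k`. -/
def xJ (J : Finset (Fin n)) : MvPowerSeries (Fin n) ℚ :=
  ∏ k ∈ J, MvPowerSeries.X k

/-- The set of linear extensions of `P`, viewed as permutations `w` of `Fin n`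
(in positions `0, …, n-1`) such that `i < j` whenever `w i <_P w j`. -/
def LinExts (P : PartialOrder (Fin n)) : Finset (Equiv.Perm (Fin n)) :=
  Finset.univ.filter (fun w => ∀ i j : Fin n, P.lt (w i) (w j) → i < j)

/-- The major index of a permutation (with 1-indexed positions). -/
def maj (w : Equiv.Perm (Fin n)) : ℕ :=
  ∑ i ∈ Finset.univ.filter
      (fun i : Fin n => ∃ h : (i : ℕ) + 1 < n, w ⟨(i : ℕ) + 1, h⟩ < w i),
    ((i : ℕ) + 1)

/-- The finset of maximum independent sets of the connected component `c` of `G_P`. -/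
def MaxIndepsOn (P : PartialOrder (Fin n)) (c : (GP P).ConnectedComponent) :
    Finset (Finset (ConnIdeal P)) :=
  Finset.univ.filter (fun Mr : Finset (ConnIdeal P) => IsMaxIndepOn (GP P) c.supp Mr)

/-!
Comparable elements of a `P`-forest have nested principal ideals and incomparable ones have
disjoint ones, since two connected ideals sharing a point have a connected union. Conversely, an
independent set of `G_P` is a laminar family of connected ideals; connectivity forces each member
`J` to contain a point lying in no smaller member, and laminarity makes these points distinct, so
there are at most `n` members.
-/

theorem SimpleGraph.Connected.exists_boundary_adj_of_induce {V : Type*} {G : SimpleGraph V}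
    {s t : Set V} (hs : (G.induce s).Connected) (hts : t ⊆ s) {a b : V} (ha : a ∈ t)
    (hb : b ∈ s) (hbt : b ∉ t) : ∃ x ∈ t, ∃ y ∈ s, y ∉ t ∧ G.Adj x y := by
  obtain ⟨w⟩ := hs.preconnected ⟨a, hts ha⟩ ⟨b, hb⟩
  obtain ⟨d, -, hd₁, hd₂⟩ := w.exists_boundary_dart {v | v.1 ∈ t} ha hbt
  exact ⟨_, hd₁, _, d.snd.2, hd₂, d.adj⟩

@[simp]
theorem mem_lamRel {le : Fin n → Fin n → Prop} {i j : Fin n} : j ∈ LamRel le i ↔ le j i := by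
  simp [LamRel]

theorem JConn.union {P : PartialOrder (Fin n)} {A B : Finset (Fin n)} (hA : JConn P A)
    (hB : JConn P B) (hAB : (A ∩ B).Nonempty) : JConn P (A ∪ B) := by
  rw [JConn, coe_union]
  exact SimpleGraph.induce_union_connected hA.preconnected hB.preconnected
    (by exact_mod_cast hAB)

namespace IsPForestRel

variable {P : PartialOrder (Fin n)} {le : Fin n → Fin n → Prop}

theorem lamRel_injective (h : IsPForestRel P le) : Function.Injective (LamRel le) := by
  intro i j hij
  have hi : i ∈ LamRel le j := hij ▸ mem_lamRel.2 (h.refl i)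
  have hj : j ∈ LamRel le i := hij ▸ mem_lamRel.2 (h.refl j)
  exact h.antisymm i j (mem_lamRel.1 hi) (mem_lamRel.1 hj)

theorem lamRel_subset (h : IsPForestRel P le) {i j : Fin n} (hij : le i j) :
    LamRel le i ⊆ LamRel le j := fun k hk =>
  mem_lamRel.2 (h.trans k i j (mem_lamRel.1 hk) hij)

theorem disjoint_lamRel (h : IsPForestRel P le) {i j : Fin n} (hij : ¬ le i j)
    (hji : ¬ le j i) : Disjoint (LamRel le i) (LamRel le j) := by
  by_contra hint
  exact (h.disc i j hij hji).2
    ((h.connIdeal i).2.union (h.connIdeal j).2 (not_disjoint_iff_nonempty_inter.1 hint))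

theorem isIndep_image (h : IsPForestRel P le) :
    IsIndep (GP P) (univ.image fun i => (⟨LamRel le i, h.connIdeal i⟩ : ConnIdeal P)) := by
  simp only [IsIndep, mem_image, mem_univ, true_and, forall_exists_index,
    forall_apply_eq_imp_iff]
  rintro i j ⟨hint, hij, hji⟩
  by_cases hle : le i j
  · exact hij (h.lamRel_subset hle)
  by_cases hge : le j i
  · exact hji (h.lamRel_subset hge)
  exact not_disjoint_iff_nonempty_inter.2 hint (h.disjoint_lamRel hle hge)

end IsPForestRel

section IndependentSets

variable {P : PartialOrder (Fin n)}

theorem ConnIdeal.nonempty (J : ConnIdeal P) : J.1.Nonempty := by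
  obtain ⟨⟨x, hx⟩⟩ := J.2.2.nonempty
  exact ⟨x, hx⟩

theorem GP.subset_or_subset_of_not_adj {A B : ConnIdeal P} (hAB : ¬ (GP P).Adj A B)
    {x : Fin n} (hxA : x ∈ A.1) (hxB : x ∈ B.1) : A.1 ⊆ B.1 ∨ B.1 ⊆ A.1 := by
  by_contra! hc
  exact hAB ⟨⟨x, mem_inter.2 ⟨hxA, hxB⟩⟩, hc.1, hc.2⟩

/-- Otherwise a maximal member `J₀ ⊊ J` of `t` would be a proper part of `J` with no comparability
edge leaving it: laminarity of `t` traps every element above a point of `J₀` inside `J₀`. -/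
theorem exists_mem_forall_ssubset_not_mem_of_isIndep {t : Finset (ConnIdeal P)}
    (ht : IsIndep (GP P) t) (J : ConnIdeal P) :
    ∃ x ∈ J.1, ∀ J' ∈ t, J'.1 ⊂ J.1 → x ∉ J'.1 := by
  by_contra! hcov
  obtain ⟨x, hx⟩ := J.nonempty
  obtain ⟨J₀, hJ₀t, hJ₀J, -⟩ := hcov x hx
  obtain ⟨J₀, hmax⟩ := (t.filter (·.1 ⊂ J.1)).exists_maximal ⟨J₀, mem_filter.2 ⟨hJ₀t, hJ₀J⟩⟩
  obtain ⟨hJ₀t, hJ₀J⟩ := mem_filter.1 hmax.1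
  obtain ⟨b, hbJ, hbJ₀⟩ := exists_of_ssubset hJ₀J
  obtain ⟨a₀, ha₀⟩ := J₀.nonempty
  obtain ⟨a, ha, b, hb, hbJ₀, hab⟩ :=
    J.2.2.exists_boundary_adj_of_induce (coe_subset.2 hJ₀J.subset) ha₀ hbJ hbJ₀
  rcases hab.2 with hab | hba
  · obtain ⟨J', hJ't, hJ'J, hbJ'⟩ := hcov b hb
    rcases GP.subset_or_subset_of_not_adj (ht J' hJ't J₀ hJ₀t) (J'.2.1 b hbJ' a hab) ha
      with hsub | hsub
    · exact hbJ₀ (hsub hbJ')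
    · exact hbJ₀ (hmax.2 (mem_filter.2 ⟨hJ't, hJ'J⟩) hsub hbJ')
  · exact hbJ₀ (J₀.2.1 a ha b hba)

theorem card_le_of_isIndep {t : Finset (ConnIdeal P)} (ht : IsIndep (GP P) t) : #t ≤ n := by
  choose f hfJ hfmin using exists_mem_forall_ssubset_not_mem_of_isIndep ht
  have hinj : Set.InjOn f t := by
    intro J₁ h₁ J₂ h₂ heq
    by_contra hne
    have hf₁ : f J₁ ∈ J₂.1 := heq ▸ hfJ J₂
    rcases GP.subset_or_subset_of_not_adj (ht J₁ h₁ J₂ h₂) (hfJ J₁) hf₁ with hs | hs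
    · exact hfmin J₂ J₁ h₁ (hs.ssubset_of_ne fun e => hne (Subtype.ext e)) (heq ▸ hfJ J₁)
    · exact hfmin J₁ J₂ h₂ (hs.ssubset_of_ne fun e => hne (Subtype.ext e.symm)) hf₁
  simpa using card_le_card_of_injOn f (t := univ) (fun _ _ => mem_coe.2 (mem_univ _)) hinj

end IndependentSets

/-- Lemma 2.2: for any `P`-forest `F`, the principal order
ideals `Λ_1^F, …, Λ_n^F` form a maximum independent set of the graph `G_P`. -/
theorem statement_4 (n : ℕ) (P F : PartialOrder (Fin n)) (h : IsPForestRel P F.le) :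
    IsMaxIndep (GP P)
      (Finset.univ.image
        (fun i : Fin n => (⟨LamRel F.le i, h.connIdeal i⟩ : ConnIdeal P))) := by
  refine ⟨h.isIndep_image, fun t ht => ?_⟩
  rw [card_image_of_injective _ fun i j hij => h.lamRel_injective (congrArg Subtype.val hij),
    card_univ, Fintype.card_fin]
  exact card_le_of_isIndep ht
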